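/- arXiv:1506.05711 — 3 statements merged into one kernel-verified Lean document; each statement's English description precedes it below -/
import Mathlib

section
/- For a subgroup A of ℚ containing ℤ, the quotient group ℚ/A is isomorphic to a direct sum, over the set J of primes p at which the p-height of 1 in A is finite, of Prüfer groups ℤ(p^∞). -/
/-- `ℚ/ℤ` as the quotient of the additive group of rationals by the subgroup ℤ. -/
abbrev QmodZ : Type := ℚ ⧸ AddSubgroup.zmultiples (1 : ℚ)

/-- The `p`-height of `1` in a subgroup `A ≤ ℚ` is finite precisely when
`1 ∈ p^r A` (i.e. `(p^r)⁻¹ ∈ A`) fails for some `r`.  `J A` is the set of primes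
where the height is finite. -/
def finiteHeightPrimes (A : AddSubgroup ℚ) : Set ℕ :=
  {p : ℕ | p.Prime ∧ ∃ r : ℕ, ((p : ℚ) ^ r)⁻¹ ∉ A}

instance (A : AddSubgroup ℚ) (q : finiteHeightPrimes A) : Fact (q.1.Prime) :=
  ⟨q.2.1⟩

/-!
For `p ∈ J` write `k = k_p(A)`. Division by `p ^ k` maps `ℤ(p^∞) ⊆ ℚ/ℤ` into the `p`-primary
part of `ℚ/A`, injectively: an element `b/p` with `p ∤ b` goes to `b/p^(k+1)`, and
`b/p^(k+1) ∈ A` would give `1/p^(k+1) ∈ A` by Bézout. Primary components of an abelian group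
are independent, so the sum of these maps over `J` is injective. It is surjective because the
`1/p^n` generate `ℚ` (partial fractions), and `1/p^n` is the image of `p^k/p^n` when `p ∈ J`
and lies in `A` when `p ∉ J`.
-/

namespace AddCommGroup

variable {G : Type*} [AddCommGroup G]

variable (G) in
def coprimeTorsion (p : ℕ) : AddSubgroup G where
  carrier := {x | ∃ n : ℕ, n.Coprime p ∧ n • x = 0}
  zero_mem' := ⟨1, Nat.coprime_one_left p, smul_zero 1⟩
  add_mem' := by
    rintro x y ⟨m, hm, hmx⟩ ⟨n, hn, hny⟩
    refine ⟨m * n, Nat.Coprime.mul_left hm hn, ?_⟩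
    rw [smul_add, mul_nsmul, mul_nsmul', hmx, hny, smul_zero, smul_zero, add_zero]
  neg_mem' := by
    rintro x ⟨n, hn, hnx⟩
    exact ⟨n, hn, by rw [smul_neg, hnx, neg_zero]⟩

theorem primaryComponent_le_coprimeTorsion {p q : ℕ} (hp : p.Prime) (hq : q.Prime) (hpq : p ≠ q) :
    primaryComponent G p ≤ coprimeTorsion G q := by
  rintro x ⟨k, hk⟩
  exact ⟨p ^ k, ((Nat.coprime_primes hp hq).2 hpq).pow_left k, hk⟩

theorem disjoint_primaryComponent_coprimeTorsion (p : ℕ) :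
    Disjoint (primaryComponent G p) (coprimeTorsion G p) := by
  rw [AddSubgroup.disjoint_def]
  rintro x ⟨k, hk⟩ ⟨n, hn, hnx⟩
  rw [← AddMonoid.addOrderOf_eq_one_iff]
  exact Nat.Coprime.eq_one_of_dvd
    (Nat.Coprime.coprime_dvd_left (addOrderOf_dvd_of_nsmul_eq_zero hnx) (hn.pow_right k))
    (addOrderOf_dvd_of_nsmul_eq_zero hk)

theorem iSupIndep_primaryComponent {J : Set ℕ} (hJ : ∀ p ∈ J, p.Prime) :
    iSupIndep fun p : J => primaryComponent G p := by
  intro p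
  refine (disjoint_primaryComponent_coprimeTorsion (G := G) p).mono_right (iSup₂_le ?_)
  intro q hqp
  exact primaryComponent_le_coprimeTorsion (hJ q q.2) (hJ p p.2) (Subtype.coe_ne_coe.2 hqp)

theorem eq_zero_of_mem_primaryComponent_of_map_eq_zero {H : Type*} [AddCommGroup H]
    (f : G →+ H) {p : ℕ} (hf : ∀ y, p • y = 0 → f y = 0 → y = 0) {x : G}
    (hx : x ∈ primaryComponent G p) (hfx : f x = 0) : x = 0 := by
  obtain ⟨n, hn⟩ := hx
  induction n generalizing x with
  | zero => simpa using hn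
  | succ n ih =>
    refine hf x (ih (x := p • x) ?_ ?_) hfx
    · rw [map_nsmul, hfx, smul_zero]
    · rw [← mul_nsmul', ← pow_succ, hn]

end AddCommGroup

open DirectSum in
theorem DirectSum.toAddMonoid_injective_of_iSupIndep {ι : Type*} [DecidableEq ι]
    {β : ι → Type*} [∀ i, AddCommGroup (β i)] {γ : Type*} [AddCommGroup γ]
    (φ : ∀ i, β i →+ γ) (hφ : ∀ i, Function.Injective (φ i))
    (hind : iSupIndep fun i => (φ i).range) :
    Function.Injective (toAddMonoid φ) := by
  have hfactor : toAddMonoid φ = (toAddMonoid fun i => (φ i).range.subtype).comp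
      (map fun i => (φ i).rangeRestrict) := by
    refine addHom_ext fun i x => ?_
    simp
  rw [hfactor]
  exact hind.dfinsuppSumAddHom_injective.comp
    ((map_injective _).2 fun i => (φ i).rangeRestrict_injective_iff.2 (hφ i))

theorem AddSubgroup.eq_top_of_inv_primePow_mem (S : AddSubgroup ℚ)
    (hS : ∀ p n : ℕ, p.Prime → ((p : ℚ) ^ n)⁻¹ ∈ S) : S = ⊤ := by
  have hinv (n : ℕ) : (n : ℚ)⁻¹ ∈ S := by
    induction n using Nat.recOnPrimeCoprime with
    | zero => simp
    | prime_pow p n hp => exact_mod_cast hS p n hp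
    | coprime a b ha hb hab iha ihb =>
      obtain ⟨u, v, huv⟩ := Nat.isCoprime_iff_coprime.2 hab
      have hsplit : ((a * b : ℕ) : ℚ)⁻¹ = u • (b : ℚ)⁻¹ + v • (a : ℚ)⁻¹ := by
        have ha0 : (a : ℚ) ≠ 0 := by positivity
        have hb0 : (b : ℚ) ≠ 0 := by positivity
        have huv' : (u : ℚ) * a + v * b = 1 := by exact_mod_cast huv
        rw [zsmul_eq_mul, zsmul_eq_mul, Nat.cast_mul, ← one_div, ← huv']
        field_simp
      rw [hsplit]
      exact S.add_mem (S.zsmul_mem ihb u) (S.zsmul_mem iha v)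
  refine eq_top_iff.2 fun q _ => ?_
  rw [← Rat.num_div_den q, div_eq_mul_inv, ← zsmul_eq_mul]
  exact S.zsmul_mem (hinv q.den) q.num

theorem AddSubgroup.inv_mem_of_div_mem_of_isCoprime {A : AddSubgroup ℚ} (h1 : (1 : ℚ) ∈ A)
    {a n : ℤ} (hco : IsCoprime a n) (h : (a : ℚ) / n ∈ A) : (n : ℚ)⁻¹ ∈ A := by
  obtain ⟨u, v, huv⟩ := hco
  rcases eq_or_ne (n : ℚ) 0 with hn | hn
  · simp [hn]
  have huv' : (u : ℚ) * a + v * n = 1 := by exact_mod_cast huv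
  have hinv : (n : ℚ)⁻¹ = u • ((a : ℚ) / n) + v • (1 : ℚ) := by
    rw [zsmul_eq_mul, zsmul_eq_mul]
    field_simp
    linear_combination -huv'
  rw [hinv]
  exact A.add_mem (A.zsmul_mem h u) (A.zsmul_mem h1 v)

namespace finiteHeightPrimes

open scoped Classical

variable {A : AddSubgroup ℚ} (hA : AddSubgroup.zmultiples (1 : ℚ) ≤ A)

variable (A) in
/-- `k_p(A)`: `Nat.find` gives the least `r` with `(p ^ r)⁻¹ ∉ A`, which is positive once
`1 ∈ A`. -/
noncomputable def height (p : finiteHeightPrimes A) : ℕ :=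
  Nat.find p.2.2 - 1

include hA in
theorem height_add_one (p : finiteHeightPrimes A) : height A p + 1 = Nat.find p.2.2 := by
  refine Nat.sub_add_cancel (Nat.pos_of_ne_zero fun h => Nat.find_spec p.2.2 ?_)
  rw [h, pow_zero, inv_one]
  exact AddSubgroup.zmultiples_le.1 hA

include hA in
theorem inv_pow_height_mem (p : finiteHeightPrimes A) : ((p : ℚ) ^ height A p)⁻¹ ∈ A :=
  not_not.1 (Nat.find_min p.2.2 (by have := height_add_one hA p; omega))

include hA in
theorem inv_pow_height_add_one_notMem (p : finiteHeightPrimes A) :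
    ((p : ℚ) ^ (height A p + 1))⁻¹ ∉ A := by
  rw [height_add_one hA]
  exact Nat.find_spec p.2.2

noncomputable def divPowHeight (p : finiteHeightPrimes A) : QmodZ →+ ℚ ⧸ A :=
  QuotientAddGroup.map _ _ (AddMonoidHom.mulLeft ((p : ℚ) ^ height A p)⁻¹)
    (AddSubgroup.zmultiples_le.2 (by simpa using inv_pow_height_mem hA p))

theorem divPowHeight_mk (p : finiteHeightPrimes A) (r : ℚ) :
    divPowHeight hA p r = (((p : ℚ) ^ height A p)⁻¹ * r : ℚ) :=
  rfl

theorem eq_zero_of_nsmul_eq_zero_of_divPowHeight_eq_zero (p : finiteHeightPrimes A) {y : QmodZ}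
    (hpy : (p : ℕ) • y = 0) (hy : divPowHeight hA p y = 0) : y = 0 := by
  obtain ⟨r, rfl⟩ := QuotientAddGroup.mk_surjective y
  rw [← QuotientAddGroup.mk_nsmul, QuotientAddGroup.eq_zero_iff,
    AddSubgroup.mem_zmultiples_iff] at hpy
  obtain ⟨b, hb⟩ := hpy
  rw [divPowHeight_mk, QuotientAddGroup.eq_zero_iff] at hy
  have hp0 : (p : ℚ) ≠ 0 := by exact_mod_cast p.2.1.ne_zero
  have hr : r = b / p := by
    rw [zsmul_one, nsmul_eq_mul] at hb
    field_simp
    linarith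
  by_cases hpb : (p : ℤ) ∣ b
  · obtain ⟨c, rfl⟩ := hpb
    rw [QuotientAddGroup.eq_zero_iff]
    exact ⟨c, by rw [hr]; push_cast; field_simp; simp⟩
  · have hco : IsCoprime b ((p : ℤ) ^ (height A p + 1)) :=
      (((Nat.prime_iff_prime_int.1 p.2.1).coprime_iff_not_dvd).2 hpb).symm.pow_right
    refine absurd ?_ (inv_pow_height_add_one_notMem hA p)
    have := A.inv_mem_of_div_mem_of_isCoprime (AddSubgroup.zmultiples_le.1 hA) hco
      (by rw [hr] at hy; convert hy using 1; push_cast; field_simp; ring)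
    simpa using this

noncomputable def toQuotient :
    DirectSum (finiteHeightPrimes A)
      (fun q => AddCommGroup.primaryComponent QmodZ q.1) →+ ℚ ⧸ A :=
  DirectSum.toAddMonoid fun p =>
    (divPowHeight hA p).comp (AddCommGroup.primaryComponent QmodZ p.1).subtype

theorem toQuotient_injective : Function.Injective (toQuotient hA) := by
  refine DirectSum.toAddMonoid_injective_of_iSupIndep _ (fun p => ?_) ?_
  · refine (injective_iff_map_eq_zero _).2 fun x hx => Subtype.ext ?_
    exact AddCommGroup.eq_zero_of_mem_primaryComponent_of_map_eq_zero (divPowHeight hA p)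
      (fun _ => eq_zero_of_nsmul_eq_zero_of_divPowHeight_eq_zero hA p) x.2 hx
  · refine (AddCommGroup.iSupIndep_primaryComponent (G := ℚ ⧸ A) fun p hp => hp.1).mono ?_
    rintro p _ ⟨x, rfl⟩
    obtain ⟨n, hn⟩ := x.2
    exact ⟨n, by rw [AddMonoidHom.comp_apply, ← map_nsmul, AddSubgroup.coe_subtype, hn, map_zero]⟩

theorem toQuotient_surjective : Function.Surjective (toQuotient hA) := by
  have htop : (toQuotient hA).range.comap (QuotientAddGroup.mk' A) = ⊤ := by
    refine AddSubgroup.eq_top_of_inv_primePow_mem _ fun p n hp => ?_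
    by_cases hpJ : p ∈ finiteHeightPrimes A
    · set P : finiteHeightPrimes A := ⟨p, hpJ⟩
      have hp0 : (p : ℚ) ≠ 0 := by exact_mod_cast hp.ne_zero
      have hx : ((((p : ℚ) ^ height A P * ((p : ℚ) ^ n)⁻¹ : ℚ)) : QmodZ) ∈
          AddCommGroup.primaryComponent QmodZ p := by
        refine ⟨n, ?_⟩
        rw [← QuotientAddGroup.mk_nsmul, QuotientAddGroup.eq_zero_iff,
          AddSubgroup.mem_zmultiples_iff]
        refine ⟨(p : ℤ) ^ height A P, ?_⟩
        rw [zsmul_one, nsmul_eq_mul]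
        push_cast
        field_simp
      refine ⟨DirectSum.of _ P ⟨_, hx⟩, ?_⟩
      rw [toQuotient, DirectSum.toAddMonoid_of, AddMonoidHom.comp_apply,
        AddSubgroup.coe_subtype, divPowHeight_mk]
      exact congrArg _ (inv_mul_cancel_left₀ (pow_ne_zero _ hp0) _)
    · have hmem : ((p : ℚ) ^ n)⁻¹ ∈ A := not_not.1 fun h => hpJ ⟨hp, n, h⟩
      rw [AddSubgroup.mem_comap, QuotientAddGroup.mk'_apply,
        (QuotientAddGroup.eq_zero_iff _).2 hmem]
      exact zero_mem _
  intro y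
  obtain ⟨q, rfl⟩ := QuotientAddGroup.mk_surjective y
  exact (htop ▸ AddSubgroup.mem_top q : q ∈ (toQuotient hA).range.comap _)

end finiteHeightPrimes

/-- For a subgroup `A` of `ℚ` containing `ℤ`, the quotient `ℚ/A` is isomorphic
to the direct sum, over the primes `p` at which the `p`-height of `1` in `A` is
finite, of the Prüfer groups `ℤ(p^∞)` (realized as the `p`-primary components
of `ℚ/ℤ`). -/
theorem quotient_rat_by_subgroup_iso_directSum_prufer (A : AddSubgroup ℚ)
    (hA : AddSubgroup.zmultiples (1 : ℚ) ≤ A) :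
    Nonempty ((ℚ ⧸ A) ≃+
      DirectSum (finiteHeightPrimes A)
        (fun q => AddCommGroup.primaryComponent QmodZ q.1)) :=
  ⟨(AddEquiv.ofBijective (finiteHeightPrimes.toQuotient hA)
    ⟨finiteHeightPrimes.toQuotient_injective hA,
      finiteHeightPrimes.toQuotient_surjective hA⟩).symm⟩
end

section
/- Let A be a subgroup of ℚ containing ℤ. Then A ⊗ ℤ_(p) ≅ ℤ_(p) for every prime p (i.e., A is in the extended genus of ℤ) if and only if A is a group of pseudo-integers, i.e., A contains ℤ[1/p] for no prime p. -/
lemma spanIntPrime_isPrime (p : ℕ) (hp : p.Prime) : (Ideal.span {(p : ℤ)}).IsPrime := by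
  rw [Ideal.span_singleton_prime (by exact_mod_cast hp.ne_zero)]
  exact Nat.prime_iff_prime_int.mp hp

/-- The integers localized at the prime `p`, `ℤ_(p)`. -/
abbrev localIntAtPrime (p : ℕ) (hp : p.Prime) : Type :=
  @Localization.AtPrime ℤ _ (Ideal.span {(p : ℤ)}) (spanIntPrime_isPrime p hp)

/-! If `ℤ[1/p] ⊆ A`, then `A` is `p`-divisible, hence so is `A ⊗ ℤ_(p)`; but `p` is not a unit
of `ℤ_(p)`. Otherwise the exponents `k` with `1/p^k ∈ A` form a bounded initial segment of `ℕ`,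
and for the largest one Bezout gives, for every `a ∈ A`, some `n` prime to `p` with
`n • a ∈ ℤ • p^(-k)`. Such `n` are units of `ℤ_(p)`, so `ℤ → A, n ↦ n/p^k` becomes surjective after
tensoring with `ℤ_(p)`, and it stays injective because `ℤ_(p)` is flat over `ℤ`. -/

open TensorProduct

theorem AddSubgroup.mem_of_isCoprime_zsmul_mem {G : Type*} [AddCommGroup G] (H : AddSubgroup G)
    {m n : ℤ} (hmn : IsCoprime m n) {y : G} (hm : m • y ∈ H) (hn : n • y ∈ H) : y ∈ H := by
  obtain ⟨a, b, hab⟩ := hmn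
  have hy : y = a • m • y + b • n • y := by rw [smul_smul, smul_smul, ← add_smul, hab, one_smul]
  rw [hy]
  exact H.add_mem (H.zsmul_mem hm a) (H.zsmul_mem hn b)

theorem Rat.ordCompl_den_mul (x : ℚ) (p : ℕ) :
    ((ordCompl[p] x.den : ℕ) : ℚ) * x = x.num / (p : ℚ) ^ x.den.factorization p := by
  have hden : ((p : ℚ) ^ x.den.factorization p) * (ordCompl[p] x.den : ℕ) = x.den := by
    exact_mod_cast Nat.ordProj_mul_ordCompl_eq_self x.den p
  have hpow : (p : ℚ) ^ x.den.factorization p ≠ 0 := by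
    exact_mod_cast (Nat.ordProj_pos x.den p).ne'
  rw [eq_div_iff hpow, ← Rat.mul_den_eq_num, ← hden]
  ring

theorem setOf_div_pow_subset_iff (A : AddSubgroup ℚ) (p : ℕ) :
    {x : ℚ | ∃ (m : ℤ) (k : ℕ), x = (m : ℚ) / (p : ℚ) ^ k} ⊆ A ↔
      ∀ k : ℕ, ((p : ℚ) ^ k)⁻¹ ∈ A := by
  constructor
  · intro h k
    exact h ⟨1, k, by simp⟩
  · rintro h _ ⟨m, k, rfl⟩
    simpa [div_eq_mul_inv] using A.zsmul_mem (h k) m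

section PowersOfPrime

variable {A : AddSubgroup ℚ} {p : ℕ}

theorem inv_pow_factorization_den_mem (h1 : (1 : ℚ) ∈ A) {x : ℚ} (hx : x ∈ A) :
    ((p : ℚ) ^ x.den.factorization p)⁻¹ ∈ A := by
  have hpow : (p : ℚ) ^ x.den.factorization p ≠ 0 := by
    exact_mod_cast (Nat.ordProj_pos x.den p).ne'
  refine A.mem_of_isCoprime_zsmul_mem (m := x.num) (n := (p : ℤ) ^ x.den.factorization p)
    ?_ ?_ ?_
  · rw [Int.isCoprime_iff_gcd_eq_one]
    simpa [Int.gcd] using Nat.Coprime.coprime_dvd_right (Nat.ordProj_dvd x.den p) x.reduced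
  · rw [zsmul_eq_mul, ← div_eq_mul_inv, ← Rat.ordCompl_den_mul]
    exact_mod_cast A.nsmul_mem hx _
  · simpa [zsmul_eq_mul, hpow] using h1

theorem div_mem_of_forall_inv_pow_mem (hp : p.Prime) (hA : ∀ k : ℕ, ((p : ℚ) ^ k)⁻¹ ∈ A)
    {x : ℚ} (hx : x ∈ A) : x / p ∈ A := by
  have hp0 : (p : ℚ) ≠ 0 := by exact_mod_cast hp.ne_zero
  refine A.mem_of_isCoprime_zsmul_mem (m := ((ordCompl[p] x.den : ℕ) : ℤ))
    (n := (p : ℤ) ^ (x.den.factorization p + 1)) ?_ ?_ ?_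
  · exact (Nat.isCoprime_iff_coprime.mpr (Nat.coprime_ordCompl hp x.den_nz).symm).pow_right
  · have h : ((ordCompl[p] x.den : ℕ) : ℤ) • (x / p) =
        x.num • ((p : ℚ) ^ (x.den.factorization p + 1))⁻¹ := by
      rw [zsmul_eq_mul, zsmul_eq_mul, Int.cast_natCast, ← mul_div_assoc, Rat.ordCompl_den_mul]
      field_simp
      ring
    rw [h]
    exact A.zsmul_mem (hA _) _
  · have h : ((p : ℤ) ^ (x.den.factorization p + 1)) • (x / p) =
        ((p : ℤ) ^ x.den.factorization p) • x := by
      simp only [zsmul_eq_mul]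
      push_cast
      field_simp
      ring
    rw [h]
    exact A.zsmul_mem hx _

theorem inv_pow_mem_of_le (hp : p.Prime) {i j : ℕ} (hij : i ≤ j) (hj : ((p : ℚ) ^ j)⁻¹ ∈ A) :
    ((p : ℚ) ^ i)⁻¹ ∈ A := by
  have hp0 : (p : ℚ) ≠ 0 := by exact_mod_cast hp.ne_zero
  have h : ((p : ℤ) ^ (j - i)) • ((p : ℚ) ^ j)⁻¹ = ((p : ℚ) ^ i)⁻¹ := by
    rw [zsmul_eq_mul, Int.cast_pow, Int.cast_natCast, ← Nat.sub_add_cancel hij, pow_add]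
    field_simp
    simp
  rw [← h]
  exact A.zsmul_mem hj _

theorem exists_max_inv_pow_mem (hp : p.Prime) (h1 : (1 : ℚ) ∈ A) {t : ℕ}
    (ht : ((p : ℚ) ^ t)⁻¹ ∉ A) :
    ∃ k, ((p : ℚ) ^ k)⁻¹ ∈ A ∧ ∀ j, ((p : ℚ) ^ j)⁻¹ ∈ A → j ≤ k := by
  have hbound : ∀ j, ((p : ℚ) ^ j)⁻¹ ∈ A → j ≤ t := fun j hj =>
    (not_le.mp fun htj => ht (inv_pow_mem_of_le hp htj hj)).le
  classical
  exact ⟨_, Nat.findGreatest_spec (P := fun j => ((p : ℚ) ^ j)⁻¹ ∈ A) (Nat.zero_le t)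
    (by simpa using h1), fun j hj => Nat.le_findGreatest (hbound j hj) hj⟩

theorem exists_zsmul_eq_zsmul_inv_pow (hp : p.Prime) (h1 : (1 : ℚ) ∈ A) {k : ℕ}
    (hk : ∀ j, ((p : ℚ) ^ j)⁻¹ ∈ A → j ≤ k) {x : ℚ} (hx : x ∈ A) :
    ∃ n m : ℤ, ¬ (p : ℤ) ∣ n ∧ n • x = m • ((p : ℚ) ^ k)⁻¹ := by
  obtain ⟨i, rfl⟩ := Nat.exists_eq_add_of_le (hk _ (inv_pow_factorization_den_mem h1 hx))
  have hp0 : (p : ℚ) ≠ 0 := by exact_mod_cast hp.ne_zero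
  refine ⟨((ordCompl[p] x.den : ℕ) : ℤ), x.num * (p : ℤ) ^ i, ?_, ?_⟩
  · exact_mod_cast Nat.not_dvd_ordCompl hp x.den_nz
  · rw [zsmul_eq_mul, zsmul_eq_mul, Int.cast_natCast, Rat.ordCompl_den_mul, pow_add]
    push_cast
    field_simp

end PowersOfPrime

theorem LinearMap.rTensor_surjective_of_forall_isUnit_zsmul_mem_range {N N' L : Type*}
    [AddCommGroup N] [AddCommGroup N'] [CommRing L] (φ : N →ₗ[ℤ] N')
    (h : ∀ y : N', ∃ n : ℤ, IsUnit (n : L) ∧ n • y ∈ LinearMap.range φ) :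
    Function.Surjective (φ.rTensor L) := by
  intro z
  induction z using TensorProduct.induction_on with
  | zero => exact ⟨0, map_zero _⟩
  | add u v hu hv =>
    obtain ⟨u', rfl⟩ := hu
    obtain ⟨v', rfl⟩ := hv
    exact ⟨u' + v', map_add _ _ _⟩
  | tmul y r =>
    obtain ⟨n, ⟨u, hu⟩, x, hx⟩ := h y
    refine ⟨x ⊗ₜ (↑u⁻¹ * r), ?_⟩
    rw [LinearMap.rTensor_tmul, hx, TensorProduct.smul_tmul, zsmul_eq_mul, ← hu,
      Units.mul_inv_cancel_left]

section LocalIntAtPrime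

variable (p : ℕ) (hp : p.Prime)

theorem localIntAtPrime.isUnit_intCast_iff (n : ℤ) :
    IsUnit (n : localIntAtPrime p hp) ↔ ¬ (p : ℤ) ∣ n := by
  have := spanIntPrime_isPrime p hp
  rw [← eq_intCast (algebraMap ℤ (localIntAtPrime p hp)),
    IsLocalization.AtPrime.isUnit_to_map_iff _ (Ideal.span {(p : ℤ)}), Ideal.mem_primeCompl_iff,
    Ideal.mem_span_singleton]

-- The tensor product uses the `ℤ`-module structure of an additive group, which is not
-- definitionally the one coming from `Algebra ℤ ℤ_(p)`.
instance localIntAtPrime.flat : Module.Flat ℤ (localIntAtPrime p hp) := by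
  have := spanIntPrime_isPrime p hp
  convert IsLocalization.flat (localIntAtPrime p hp) (Ideal.span {(p : ℤ)}).primeCompl
  · rfl
  · exact Subsingleton.elim _ _

end LocalIntAtPrime

section ExtendedGenus

variable {A : AddSubgroup ℚ} {p : ℕ}

theorem isEmpty_tensor_localIntAtPrime_equiv (hp : p.Prime)
    (hA : ∀ k : ℕ, ((p : ℚ) ^ k)⁻¹ ∈ A) :
    IsEmpty (A ⊗[ℤ] localIntAtPrime p hp ≃ₗ[ℤ] localIntAtPrime p hp) := by
  refine ⟨fun e => ?_⟩
  have hp0 : (p : ℚ) ≠ 0 := by exact_mod_cast hp.ne_zero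
  have hdivA : Function.Surjective ((p : ℤ) • LinearMap.id : A →ₗ[ℤ] A) := fun a =>
    ⟨⟨a / p, div_mem_of_forall_inv_pow_mem hp hA a.2⟩,
      Subtype.ext (by simpa using mul_div_cancel₀ (a : ℚ) hp0)⟩
  obtain ⟨z, hz⟩ := LinearMap.rTensor_surjective (localIntAtPrime p hp) hdivA (e.symm 1)
  rw [LinearMap.rTensor_smul, LinearMap.rTensor_id, LinearMap.smul_apply, LinearMap.id_apply]
    at hz
  have hunit : (p : ℤ) • e z = 1 := by rw [← map_smul, hz, e.apply_symm_apply]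
  rw [zsmul_eq_mul] at hunit
  exact (localIntAtPrime.isUnit_intCast_iff p hp p).mp (IsUnit.of_mul_eq_one _ hunit) dvd_rfl

theorem nonempty_tensor_localIntAtPrime_equiv (hp : p.Prime) (h1 : (1 : ℚ) ∈ A) {t : ℕ}
    (ht : ((p : ℚ) ^ t)⁻¹ ∉ A) :
    Nonempty (A ⊗[ℤ] localIntAtPrime p hp ≃ₗ[ℤ] localIntAtPrime p hp) := by
  obtain ⟨k, hk, hmax⟩ := exists_max_inv_pow_mem hp h1 ht
  have hp0 : (p : ℚ) ≠ 0 := by exact_mod_cast hp.ne_zero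
  let φ := LinearMap.toSpanSingleton ℤ A ⟨_, hk⟩
  have hinj : Function.Injective φ := smul_left_injective ℤ (by simp [hp0])
  have hsurj : Function.Surjective (φ.rTensor (localIntAtPrime p hp)) :=
    φ.rTensor_surjective_of_forall_isUnit_zsmul_mem_range fun a => by
      obtain ⟨n, m, hn, hnm⟩ := exists_zsmul_eq_zsmul_inv_pow hp h1 hmax a.2
      exact ⟨n, (localIntAtPrime.isUnit_intCast_iff p hp n).mpr hn, m, Subtype.ext hnm.symm⟩
  exact ⟨(LinearEquiv.ofBijective _
    ⟨Module.Flat.rTensor_preserves_injective_linearMap φ hinj, hsurj⟩).symm ≪≫ₗ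
      TensorProduct.lid ℤ _⟩

end ExtendedGenus

/-- For a subgroup `A` of `ℚ` containing `ℤ`: `A ⊗ ℤ_(p) ≅ ℤ_(p)` for every
prime `p` (i.e. `A` is in the extended genus of `ℤ`) iff `A` is a group of
pseudo-integers, i.e. `A` contains `ℤ[1/p]` for no prime `p`. -/
theorem extended_genus_of_Z_iff_pseudo_integers (A : AddSubgroup ℚ)
    (hA : AddSubgroup.zmultiples (1 : ℚ) ≤ A) :
    (∀ (p : ℕ) (hp : p.Prime),
        Nonempty (TensorProduct ℤ A (localIntAtPrime p hp) ≃ₗ[ℤ]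
          localIntAtPrime p hp)) ↔
      (∀ p : ℕ, p.Prime →
        ¬ ({x : ℚ | ∃ (m : ℤ) (k : ℕ), x = (m : ℚ) / (p : ℚ) ^ k} ⊆ A)) := by
  have h1 : (1 : ℚ) ∈ A := AddSubgroup.zmultiples_le.mp hA
  simp only [setOf_div_pow_subset_iff]
  refine ⟨fun h p hp hsub => (isEmpty_tensor_localIntAtPrime_equiv hp hsub).false (h p hp).some,
    fun h p hp => ?_⟩
  obtain ⟨t, ht⟩ := not_forall.mp (h p hp)
  exact nonempty_tensor_localIntAtPrime_equiv hp h1 ht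
end

section
/- A homomorphism ∂ : ℚ → ℚ/ℤ is surjective if and only if its kernel is a group of pseudo-integers (up to isomorphism), i.e., a torsion-free rank-one group whose height sequence has only finite entries. -/
/-- The `p`-height of `1` in a subgroup `A ≤ ℚ`:
`k_p(A) = sup { r ≥ 0 : 1 ∈ p^r A } ∈ ℕ ∪ {∞}`. -/
noncomputable def pHeight (A : AddSubgroup ℚ) (p : ℕ) : ℕ∞ :=
  ⨆ r ∈ {r : ℕ | ((p : ℚ) ^ r)⁻¹ ∈ A}, (r : ℕ∞)

/-!
Both sides say that the kernel `K` of `∂` is not `p`-divisible for any prime `p`. Whether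
`x / p ^ j ∈ K` for all `j` does not depend on the nonzero `x ∈ K` (Bézout against the part of
the denominator of `y / x` prime to `p`), so this is an isomorphism invariant of `K`, and for a
subgroup containing `1` it means that the `p`-height is finite. If `∂` is onto and `K` were
`p`-divisible, a preimage of `1/p` would lie in `K`. Conversely, if `b ∈ K` and `h` is largest
with `b / p ^ h ∈ K`, then `∂ (b / p ^ (h + k))` has order exactly `p ^ k`, so it generates the
same cyclic subgroup as `1/p^k`; these elements generate `ℚ/ℤ`.
-/

open Pointwise

theorem Nat.exists_and_not_add_one {P : ℕ → Prop} (h0 : P 0) (h : ∃ j, ¬ P j) :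
    ∃ n, P n ∧ ¬ P (n + 1) := by
  by_contra! hstep
  obtain ⟨j, hj⟩ := h
  exact hj (Nat.rec h0 hstep j)

theorem AddSubgroup.mem_of_zsmul_mem_of_isCoprime {G : Type*} [AddGroup G] (H : AddSubgroup G)
    {m n : ℤ} (hmn : IsCoprime m n) {x : G} (hm : m • x ∈ H) (hn : n • x ∈ H) : x ∈ H := by
  obtain ⟨u, v, huv⟩ := hmn
  have hx : x = u • m • x + v • n • x := by
    rw [← mul_zsmul, ← mul_zsmul, ← add_zsmul, huv, one_zsmul]
  rw [hx]
  exact add_mem (zsmul_mem hm u) (zsmul_mem hn v)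

namespace QmodZ

theorem addOrderOf_coe (q : ℚ) : addOrderOf (q : QmodZ) = q.den := by
  have : Fact ((0 : ℚ) < 1) := ⟨one_pos⟩
  simpa using AddCircle.addOrderOf_coe_rat (p := (1 : ℚ)) (q := q)

theorem coe_inv_addOrderOf_mem_zmultiples (z : QmodZ) :
    (((addOrderOf z : ℚ)⁻¹ : ℚ) : QmodZ) ∈ AddSubgroup.zmultiples z := by
  induction z using QuotientAddGroup.induction_on with
  | H q =>
  obtain ⟨u, v, huv⟩ : IsCoprime q.num q.den := Int.isCoprime_iff_gcd_eq_one.mpr q.reduced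
  have huv' : (u : ℚ) * q.num + v * q.den = 1 := by exact_mod_cast huv
  have hden : (q.den : ℚ) ≠ 0 := by positivity
  refine AddSubgroup.mem_zmultiples_iff.mpr ⟨u, ?_⟩
  rw [addOrderOf_coe, ← QuotientAddGroup.mk_zsmul, QuotientAddGroup.eq_iff_sub_mem,
    AddSubgroup.mem_zmultiples_iff]
  refine ⟨-v, ?_⟩
  rw [zsmul_eq_mul, zsmul_eq_mul]
  field_simp
  push_cast
  linear_combination -huv' - (u : ℚ) * q.mul_den_eq_num

theorem coe_inv_natCast_mem_of_forall_prime_pow {H : AddSubgroup QmodZ}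
    (h : ∀ p k : ℕ, p.Prime → 0 < k → ((((p ^ k : ℕ) : ℚ)⁻¹ : ℚ) : QmodZ) ∈ H) (n : ℕ) :
    (((n : ℚ)⁻¹ : ℚ) : QmodZ) ∈ H := by
  induction n using Nat.recOnPosPrimePosCoprime with
  | prime_pow p k hp hk => exact h p k hp hk
  | zero => simp
  | one => simpa using AddCircle.coe_period (1 : ℚ) ▸ H.zero_mem
  | coprime a b ha hb hab iha ihb =>
    have : (a : ℚ) ≠ 0 := by positivity
    have : (b : ℚ) ≠ 0 := by positivity
    refine H.mem_of_zsmul_mem_of_isCoprime (Nat.isCoprime_iff_coprime.mpr hab) ?_ ?_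
    · convert ihb using 1
      rw [← QuotientAddGroup.mk_zsmul, zsmul_eq_mul]
      push_cast
      field_simp
    · convert iha using 1
      rw [← QuotientAddGroup.mk_zsmul, zsmul_eq_mul]
      push_cast
      field_simp

theorem eq_top_of_forall_prime_pow {H : AddSubgroup QmodZ}
    (h : ∀ p k : ℕ, p.Prime → 0 < k → ((((p ^ k : ℕ) : ℚ)⁻¹ : ℚ) : QmodZ) ∈ H) : H = ⊤ := by
  refine eq_top_iff.mpr fun z _ => ?_
  induction z using QuotientAddGroup.induction_on with
  | H q =>
  have hq : ((q : ℚ) : QmodZ) = q.num • (((q.den : ℚ)⁻¹ : ℚ) : QmodZ) := by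
    rw [← QuotientAddGroup.mk_zsmul, zsmul_eq_mul, ← div_eq_mul_inv, q.num_div_den]
  rw [hq]
  exact zsmul_mem (coe_inv_natCast_mem_of_forall_prime_pow h _) _

end QmodZ

namespace AddSubgroup

theorem inv_pow_mem_of_le {A : AddSubgroup ℚ} {p : ℕ} (hp : p ≠ 0) {k r : ℕ}
    (hkr : k ≤ r) (h : ((p : ℚ) ^ r)⁻¹ ∈ A) : ((p : ℚ) ^ k)⁻¹ ∈ A := by
  obtain ⟨j, rfl⟩ := Nat.exists_eq_add_of_le hkr
  have : ((p : ℚ) ^ k)⁻¹ = (p ^ j) • ((p : ℚ) ^ (k + j))⁻¹ := by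
    rw [nsmul_eq_mul, pow_add, Nat.cast_pow]
    field_simp
  rw [this]
  exact A.nsmul_mem h _

theorem div_pow_mem_of_forall_div_pow_mem {G : AddSubgroup ℚ} {p : ℕ} (hp : p.Prime)
    {x y : ℚ} (hx0 : x ≠ 0) (hx : ∀ j : ℕ, x / (p : ℚ) ^ j ∈ G) (hy : y ∈ G) (j : ℕ) :
    y / (p : ℚ) ^ j ∈ G := by
  set q := y / x with hq
  obtain ⟨a, s, hps, hden⟩ := Nat.exists_eq_pow_mul_and_not_dvd q.den_nz p hp.ne_one
  have hcop : IsCoprime (s : ℤ) ((p ^ j : ℕ) : ℤ) :=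
    Nat.isCoprime_iff_coprime.mpr ((hp.coprime_iff_not_dvd.mpr hps).symm.pow_right j)
  have hp0 : (p : ℚ) ≠ 0 := by exact_mod_cast hp.ne_zero
  refine G.mem_of_zsmul_mem_of_isCoprime hcop ?_ ?_
  · have hnum : (q.den : ℚ) * y = q.num * x := by
      rw [← q.den_mul_eq_num, hq]
      field_simp
    have : (s : ℤ) • (y / (p : ℚ) ^ j) = q.num • (x / (p : ℚ) ^ (a + j)) := by
      rw [hden] at hnum
      rw [zsmul_eq_mul, zsmul_eq_mul, pow_add]
      push_cast at hnum ⊢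
      field_simp
      linear_combination hnum
    rw [this]
    exact G.zsmul_mem (hx _) _
  · have : ((p ^ j : ℕ) : ℤ) • (y / (p : ℚ) ^ j) = y := by
      rw [zsmul_eq_mul]
      push_cast
      field_simp
    rwa [this]

end AddSubgroup

theorem AddMonoidHom.coe_apply_div_natCast_mem {G A : AddSubgroup ℚ} (f : G →+ A) {x : ℚ}
    (hx : x ∈ G) {n : ℕ} (hxn : x / n ∈ G) : (f ⟨x, hx⟩ : ℚ) / n ∈ A := by
  rcases eq_or_ne n 0 with rfl | hn
  · simp
  have hn' : (n : ℚ) ≠ 0 := by exact_mod_cast hn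
  have hsmul : n • (⟨x / n, hxn⟩ : G) = ⟨x, hx⟩ := by
    ext
    rw [AddSubgroup.coe_nsmul, nsmul_eq_mul]
    field_simp
  have : (f ⟨x, hx⟩ : ℚ) / n = f ⟨x / n, hxn⟩ := by
    rw [← hsmul, map_nsmul, AddSubgroup.coe_nsmul, nsmul_eq_mul]
    field_simp
  rw [this]
  exact (f _).2

theorem pHeight_eq_top_iff {A : AddSubgroup ℚ} {p : ℕ} (hp : p ≠ 0) :
    pHeight A p = ⊤ ↔ ∀ r : ℕ, ((p : ℚ) ^ r)⁻¹ ∈ A := by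
  rw [ENat.eq_top_iff_forall_ge]
  refine ⟨fun h k => ?_, fun h m => le_biSup (fun r : ℕ => (r : ℕ∞)) (h m)⟩
  by_contra hk
  have hle : pHeight A p ≤ k := iSup₂_le fun r hr =>
    Nat.cast_le.mpr (not_lt.mp fun hkr => hk (A.inv_pow_mem_of_le hp hkr.le hr))
  exact Nat.lt_irrefl k (Nat.cast_le.mp ((h (k + 1)).trans hle))

theorem exists_ne_zero_mem_ker (d : ℚ →+ QmodZ) : ∃ b : ℚ, b ≠ 0 ∧ b ∈ d.ker := by
  obtain ⟨q, hq⟩ := QuotientAddGroup.mk_surjective (d 1)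
  refine ⟨q.den, by positivity, ?_⟩
  rw [AddMonoidHom.mem_ker, ← nsmul_one, map_nsmul, ← hq, ← QmodZ.addOrderOf_coe]
  exact addOrderOf_nsmul_eq_zero _

theorem exists_div_pow_notMem_ker_of_surjective {d : ℚ →+ QmodZ} (hd : Function.Surjective d)
    {b : ℚ} (hb0 : b ≠ 0) {p : ℕ} (hp : p.Prime) : ∃ j : ℕ, b / (p : ℚ) ^ j ∉ d.ker := by
  by_contra! hall
  obtain ⟨x, hx⟩ := hd (((p : ℚ)⁻¹ : ℚ) : QmodZ)
  have hord : addOrderOf (d x) = p := by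
    rw [hx, QmodZ.addOrderOf_coe, Rat.inv_natCast_den_of_pos hp.pos]
  have hpx : p • x ∈ d.ker := by
    rw [AddMonoidHom.mem_ker, map_nsmul, ← hord]
    exact addOrderOf_nsmul_eq_zero _
  have hx0 : d x = 0 := by
    simpa [nsmul_eq_mul, hp.ne_zero] using d.ker.div_pow_mem_of_forall_div_pow_mem hp hb0 hall hpx 1
  rw [hx0, addOrderOf_zero] at hord
  exact hp.one_lt.ne hord

theorem coe_inv_prime_pow_mem_range (d : ℚ →+ QmodZ) {p : ℕ} (hp : p.Prime) {b : ℚ} {h : ℕ}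
    (hin : b / (p : ℚ) ^ h ∈ d.ker) (hout : b / (p : ℚ) ^ (h + 1) ∉ d.ker) (k : ℕ) :
    ((((p ^ (k + 1) : ℕ) : ℚ)⁻¹ : ℚ) : QmodZ) ∈ d.range := by
  have : Fact p.Prime := ⟨hp⟩
  have hp0 : (p : ℚ) ≠ 0 := by exact_mod_cast hp.ne_zero
  have hdiv : ∀ n m : ℕ, p ^ m • (b / (p : ℚ) ^ (n + m)) = b / (p : ℚ) ^ n := by
    intro n m
    rw [nsmul_eq_mul, pow_add]
    push_cast
    field_simp
  set z := d (b / (p : ℚ) ^ (h + 1 + k)) with hz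
  have hord : addOrderOf z = p ^ (k + 1) := by
    refine addOrderOf_eq_prime_pow ?_ ?_
    · rw [hz, ← map_nsmul, hdiv]
      exact hout
    · rw [hz, ← map_nsmul, show h + 1 + k = h + (k + 1) by omega, hdiv]
      exact hin
  have := QmodZ.coe_inv_addOrderOf_mem_zmultiples z
  rw [hord] at this
  exact AddSubgroup.zmultiples_le.mpr (AddMonoidHom.mem_range.mpr ⟨_, rfl⟩) this

theorem surjective_iff_forall_exists_div_pow_notMem_ker (d : ℚ →+ QmodZ) {b : ℚ} (hb0 : b ≠ 0)
    (hb : b ∈ d.ker) :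
    Function.Surjective d ↔ ∀ p : ℕ, p.Prime → ∃ j : ℕ, b / (p : ℚ) ^ j ∉ d.ker := by
  refine ⟨fun hd p hp => exists_div_pow_notMem_ker_of_surjective hd hb0 hp, fun h => ?_⟩
  rw [← AddMonoidHom.range_eq_top]
  refine QmodZ.eq_top_of_forall_prime_pow fun p k hp hk => ?_
  obtain ⟨k, rfl⟩ := Nat.exists_eq_add_one_of_ne_zero hk.ne'
  obtain ⟨h, hin, hout⟩ := Nat.exists_and_not_add_one
    (P := fun j => b / (p : ℚ) ^ j ∈ d.ker) (by simpa using hb) (h p hp)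
  exact coe_inv_prime_pow_mem_range d hp hin hout k

theorem exists_addEquiv_pseudoIntegers_iff (G : AddSubgroup ℚ) {b : ℚ} (hb0 : b ≠ 0)
    (hb : b ∈ G) :
    (∃ A : AddSubgroup ℚ, AddSubgroup.zmultiples (1 : ℚ) ≤ A ∧
        (∀ p : ℕ, p.Prime → pHeight A p ≠ ⊤) ∧ Nonempty (G ≃+ A)) ↔
      ∀ p : ℕ, p.Prime → ∃ j : ℕ, b / (p : ℚ) ^ j ∉ G := by
  constructor
  · rintro ⟨A, hA1, hfin, ⟨e⟩⟩ p hp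
    by_contra! hall
    have ha0 : (e ⟨b, hb⟩ : ℚ) ≠ 0 := by simpa [Subtype.ext_iff] using hb0
    have hdiv (j : ℕ) : (e ⟨b, hb⟩ : ℚ) / (p : ℚ) ^ j ∈ A := by
      simpa using e.toAddMonoidHom.coe_apply_div_natCast_mem hb (n := p ^ j)
        (by simpa using hall j)
    refine hfin p hp ((pHeight_eq_top_iff hp.ne_zero).mpr fun r => ?_)
    have h1 : (1 : ℚ) ∈ A := hA1 (AddSubgroup.mem_zmultiples 1)
    simpa using A.div_pow_mem_of_forall_div_pow_mem hp ha0 hdiv h1 r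
  · intro h
    refine ⟨b⁻¹ • G, ?_, fun p hp htop => ?_,
      ⟨(DistribMulAction.toAddEquiv₀ ℚ b⁻¹ (inv_ne_zero hb0)).addSubgroupMap G⟩⟩
    · rw [AddSubgroup.zmultiples_le, AddSubgroup.mem_inv_pointwise_smul_iff₀ hb0, smul_eq_mul,
        mul_one]
      exact hb
    · obtain ⟨j, hj⟩ := h p hp
      have := (pHeight_eq_top_iff hp.ne_zero).mp htop j
      rw [AddSubgroup.mem_inv_pointwise_smul_iff₀ hb0, smul_eq_mul, ← div_eq_mul_inv] at this
      exact hj this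

/-- A homomorphism `∂ : ℚ → ℚ/ℤ` is surjective iff its kernel is, up to
isomorphism, a group of pseudo-integers: a subgroup of `ℚ` containing `ℤ` whose
height sequence has only finite entries. -/
theorem surjective_iff_ker_pseudo_integers (d : ℚ →+ QmodZ) :
    Function.Surjective d ↔
      ∃ A : AddSubgroup ℚ, AddSubgroup.zmultiples (1 : ℚ) ≤ A ∧
        (∀ p : ℕ, p.Prime → pHeight A p ≠ ⊤) ∧ Nonempty (d.ker ≃+ A) := by
  obtain ⟨b, hb0, hb⟩ := exists_ne_zero_mem_ker d
  rw [surjective_iff_forall_exists_div_pow_notMem_ker d hb0 hb,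
    exists_addEquiv_pseudoIntegers_iff d.ker hb0 hb]
end
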